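/- arXiv:1906.10028 — 6 statements merged into one kernel-verified Lean document; each statement's English description precedes it below -/
import Mathlib

section
/- Let X and Y be Banach spaces, A ⊆ X an open subset, W ⊆ X a finite-dimensional subspace, and K ⊆ W ∩ A a compact and convex subset. Let F ∈ C¹(A,Y) be such that the restriction F|_{W∩A} is injective and, for every x ∈ W ∩ A, the restriction F'(x)|_W of the Fréchet derivative to W is injective. Then there exists a constant C > 0 such that ‖x₁ − x₂‖_X ≤ C ‖F(x₁) − F(x₂)‖_Y for all x₁, x₂ ∈ K. -/
/-!
An injective linear map on a finite-dimensional space is bounded below, so `‖v‖ ≤ K ‖F'(a) v‖`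
for `v ∈ W`. Since `F` is `C¹`, it is strictly differentiable at `a`, and this lower bound
passes to `F` itself on pairs `(x₁, x₂)` near `(a, a)` with `x₁ - x₂ ∈ W`. Near an off-diagonal
pair `(a, b)` of `K × K` a constant comes from `F a ≠ F b` and continuity. Compactness of `K × K`
patches the local constants into a global one.
-/

open Filter Topology Set
open scoped NNReal

theorem ContinuousLinearMap.exists_norm_le_mul_norm_of_injOn {𝕜 E F : Type*}
    [NontriviallyNormedField 𝕜] [CompleteSpace 𝕜] [NormedAddCommGroup E] [NormedSpace 𝕜 E]
    [NormedAddCommGroup F] [NormedSpace 𝕜 F] (T : E →L[𝕜] F) {W : Submodule 𝕜 E}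
    [FiniteDimensional 𝕜 W] (hT : InjOn T W) :
    ∃ K : ℝ≥0, 0 < K ∧ ∀ v ∈ W, ‖v‖ ≤ K * ‖T v‖ := by
  have hinj : Function.Injective (T.toLinearMap ∘ₗ W.subtype) :=
    fun v w h ↦ Subtype.ext (hT v.2 w.2 h)
  obtain ⟨K, hK0, hK⟩ := (T.toLinearMap ∘ₗ W.subtype).injective_iff_antilipschitz.mp hinj
  exact ⟨K, hK0, fun v hv ↦ ZeroHomClass.bound_of_antilipschitz _ hK ⟨v, hv⟩⟩

theorem HasStrictFDerivAt.exists_norm_sub_le_mul_norm_sub_of_injOn {𝕜 E F : Type*}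
    [NontriviallyNormedField 𝕜] [CompleteSpace 𝕜] [NormedAddCommGroup E] [NormedSpace 𝕜 E]
    [NormedAddCommGroup F] [NormedSpace 𝕜 F] {f : E → F} {f' : E →L[𝕜] F} {a : E}
    (hf : HasStrictFDerivAt f f' a) {W : Submodule 𝕜 E} [FiniteDimensional 𝕜 W]
    (hinj : InjOn f' W) :
    ∃ C : ℝ, ∀ᶠ q in 𝓝 (a, a), q.1 - q.2 ∈ W → ‖q.1 - q.2‖ ≤ C * ‖f q.1 - f q.2‖ := by
  obtain ⟨K, hK0, hK⟩ := f'.exists_norm_le_mul_norm_of_injOn hinj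
  obtain ⟨s, hs, happrox⟩ :=
    hf.approximates_deriv_on_nhds (c := (2 * K)⁻¹) (Or.inr (by positivity))
  refine ⟨2 * K, ?_⟩
  filter_upwards [prod_mem_nhds hs hs] with ⟨x, y⟩ ⟨hx, hy⟩ hxy
  have hlin : ‖f' (x - y)‖ ≤ ‖f x - f y‖ + (2 * K : ℝ)⁻¹ * ‖x - y‖ := by
    have happrox_xy := happrox x hx y hy
    push_cast at happrox_xy
    have htri := norm_sub_le (f x - f y) (f x - f y - f' (x - y))
    rw [sub_sub_cancel] at htri
    linarith
  have hhalf : ‖x - y‖ ≤ K * ‖f x - f y‖ + ‖x - y‖ / 2 := calc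
    ‖x - y‖ ≤ K * ‖f' (x - y)‖ := hK _ hxy
    _ ≤ K * (‖f x - f y‖ + (2 * K : ℝ)⁻¹ * ‖x - y‖) := by gcongr
    _ = K * ‖f x - f y‖ + ‖x - y‖ / 2 := by
      have : (K : ℝ) ≠ 0 := by positivity
      field_simp
  linarith

theorem ContinuousOn.exists_eventually_dist_le_mul_dist_of_ne {X Y : Type*} [PseudoMetricSpace X]
    [MetricSpace Y] {K : Set X} {f : X → Y} (hf : ContinuousOn f K) {a b : X} (ha : a ∈ K)
    (hb : b ∈ K) (hab : f a ≠ f b) :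
    ∃ C : ℝ, ∀ᶠ q in 𝓝[K ×ˢ K] (a, b), dist q.1 q.2 ≤ C * dist (f q.1) (f q.2) := by
  have hδ : 0 < dist (f a) (f b) := dist_pos.mpr hab
  have hfq : ContinuousWithinAt (fun q : X × X ↦ dist (f q.1) (f q.2)) (K ×ˢ K) (a, b) :=
    ((hf a ha).comp continuousWithinAt_fst mapsTo_fst_prod).dist
      ((hf b hb).comp continuousWithinAt_snd mapsTo_snd_prod)
  have hlower : ∀ᶠ q in 𝓝[K ×ˢ K] (a, b), dist (f a) (f b) / 2 < dist (f q.1) (f q.2) :=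
    hfq.eventually_const_lt (half_lt_self hδ)
  have hupper : ∀ᶠ q in 𝓝[K ×ˢ K] (a, b), dist q.1 q.2 < dist a b + 1 :=
    nhdsWithin_le_nhds <| continuous_dist.continuousAt.eventually_lt continuousAt_const
      (lt_add_one _)
  refine ⟨(dist a b + 1) / (dist (f a) (f b) / 2), ?_⟩
  filter_upwards [hlower, hupper] with q hql hqu
  calc dist q.1 q.2 ≤ (dist a b + 1) / (dist (f a) (f b) / 2) * (dist (f a) (f b) / 2) := by
        rw [div_mul_cancel₀ _ (by positivity)]; exact hqu.le
    _ ≤ _ := by gcongr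

theorem IsCompact.exists_dist_le_mul_dist_of_injOn {X Y : Type*} [PseudoMetricSpace X]
    [MetricSpace Y] {K : Set X} (hK : IsCompact K) {f : X → Y} (hf : ContinuousOn f K)
    (hinj : InjOn f K)
    (hdiag : ∀ a ∈ K, ∃ C : ℝ, ∀ᶠ q in 𝓝[K ×ˢ K] (a, a),
      dist q.1 q.2 ≤ C * dist (f q.1) (f q.2)) :
    ∃ C > 0, ∀ x ∈ K, ∀ y ∈ K, dist x y ≤ C * dist (f x) (f y) := by
  let P : Set (X × X) → Prop := fun s ↦
    ∃ C : ℝ, ∀ q ∈ s, dist q.1 q.2 ≤ C * dist (f q.1) (f q.2)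
  have hP : P (K ×ˢ K) := by
    refine (hK.prod hK).induction_on (p := P) ⟨0, by simp⟩
      (fun s t hst ⟨C, hC⟩ ↦ ⟨C, fun q hq ↦ hC q (hst hq)⟩)
      (fun s t ⟨C, hC⟩ ⟨D, hD⟩ ↦ ⟨max C D, ?_⟩) ?_
    · rintro q (hq | hq)
      · exact (hC q hq).trans (by gcongr; exact le_max_left C D)
      · exact (hD q hq).trans (by gcongr; exact le_max_right C D)
    · rintro ⟨a, b⟩ ⟨ha, hb⟩
      obtain ⟨C, hC⟩ : ∃ C : ℝ, ∀ᶠ q in 𝓝[K ×ˢ K] (a, b),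
          dist q.1 q.2 ≤ C * dist (f q.1) (f q.2) := by
        by_cases hab : a = b
        · subst hab; exact hdiag a ha
        · exact hf.exists_eventually_dist_le_mul_dist_of_ne ha hb (hinj.ne ha hb hab)
      exact ⟨_, hC, C, fun q hq ↦ hq⟩
  obtain ⟨C, hC⟩ := hP
  refine ⟨max C 1, by positivity, fun x hx y hy ↦ (hC (x, y) ⟨hx, hy⟩).trans ?_⟩
  gcongr
  exact le_max_left C 1

theorem lipschitz_stability_full_measurements_general
    {X Y : Type*} [NormedAddCommGroup X] [NormedSpace ℝ X]
    [NormedAddCommGroup Y] [NormedSpace ℝ Y]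
    (A : Set X) (hA : IsOpen A)
    (W : Submodule ℝ X) [FiniteDimensional ℝ W]
    (K : Set X) (hKWA : K ⊆ (W : Set X) ∩ A)
    (hKcomp : IsCompact K)
    (F : X → Y) (F' : X → X →L[ℝ] Y)
    (hF : ∀ x ∈ A, HasFDerivAt F (F' x) x)
    (hF'cont : ContinuousOn F' A)
    (hFinj : Set.InjOn F ((W : Set X) ∩ A))
    (hF'inj : ∀ x ∈ (W : Set X) ∩ A, Set.InjOn (F' x) (W : Set X)) :
    ∃ C > 0, ∀ x₁ ∈ K, ∀ x₂ ∈ K, ‖x₁ - x₂‖ ≤ C * ‖F x₁ - F x₂‖ := by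
  have hFcont : ContinuousOn F K :=
    fun x hx ↦ (hF x (hKWA hx).2).continuousAt.continuousWithinAt
  have hdiag : ∀ a ∈ K, ∃ C : ℝ, ∀ᶠ q in 𝓝[K ×ˢ K] (a, a),
      dist q.1 q.2 ≤ C * dist (F q.1) (F q.2) := by
    intro a ha
    have hstrict : HasStrictFDerivAt F (F' a) a :=
      hasStrictFDerivAt_of_hasFDerivAt_of_continuousAt
        (eventually_of_mem (hA.mem_nhds (hKWA ha).2) hF)
        (hF'cont.continuousAt (hA.mem_nhds (hKWA ha).2))
    obtain ⟨C, hC⟩ := hstrict.exists_norm_sub_le_mul_norm_sub_of_injOn (hF'inj a (hKWA ha))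
    refine ⟨C, ?_⟩
    filter_upwards [nhdsWithin_le_nhds hC, self_mem_nhdsWithin] with q hq ⟨hq₁, hq₂⟩
    simpa only [dist_eq_norm] using hq (W.sub_mem (hKWA hq₁).1 (hKWA hq₂).1)
  simpa only [dist_eq_norm] using
    hKcomp.exists_dist_le_mul_dist_of_injOn hFcont (hFinj.mono hKWA) hdiag

/-- Theorem `theo:lip`: Lipschitz stability with infinite-dimensional
measurements, for a C¹ map injective on a finite-dimensional subspace. -/
theorem lipschitz_stability_full_measurements
    {X Y : Type*} [NormedAddCommGroup X] [NormedSpace ℝ X] [CompleteSpace X]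
    [NormedAddCommGroup Y] [NormedSpace ℝ Y] [CompleteSpace Y]
    (A : Set X) (hA : IsOpen A)
    (W : Submodule ℝ X) [FiniteDimensional ℝ W]
    (K : Set X) (hKWA : K ⊆ (W : Set X) ∩ A)
    (hKcomp : IsCompact K) (hKconv : Convex ℝ K)
    (F : X → Y) (F' : X → X →L[ℝ] Y)
    (hF : ∀ x ∈ A, HasFDerivAt F (F' x) x)
    (hF'cont : ContinuousOn F' A)
    (hFinj : Set.InjOn F ((W : Set X) ∩ A))
    (hF'inj : ∀ x ∈ (W : Set X) ∩ A, Set.InjOn (F' x) (W : Set X)) :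
    ∃ C > 0, ∀ x₁ ∈ K, ∀ x₂ ∈ K, ‖x₁ - x₂‖ ≤ C * ‖F x₁ - F x₂‖ :=
  lipschitz_stability_full_measurements_general A hA W K hKWA hKcomp F F' hF hF'cont hFinj hF'inj
end

section
/- Let X and Y be Banach spaces, A ⊆ X an open subset, W ⊆ X a finite-dimensional subspace, K ⊆ W ∩ A a compact subset, and F ∈ C¹(A,Y). Let Q_N : Y → Y (N ∈ ℕ) be bounded linear maps satisfying the Hypothesis with respect to W and K. Then s_N := sup_{ξ ∈ K} ‖(I_Y − Q_N) ∘ F'(ξ)‖_{W → Y} (the operator norm of the restriction to W) tends to 0 as N → ∞. -/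
/-!
Put `T_N = I - Q_N`. The bound `‖Q_N‖ ≤ D` makes the `T_N` uniformly Lipschitz, hence
equicontinuous, so their pointwise convergence to `0` on `Ỹ` is uniform on every compact subset
of `Ỹ`. Since `W` is finite-dimensional, its unit sphere `S` is compact, and so is the image
`{F'(ξ) w : ξ ∈ K, w ∈ S}` under the continuous map `(ξ, w) ↦ F'(ξ) w`; by (a) it lies in `Ỹ`.
Uniform smallness of `T_N` on this set bounds `‖T_N ∘ F'(ξ)|_W‖` uniformly in `ξ ∈ K`.
-/

open Filter Topology

theorem EquicontinuousOn.tendstoUniformlyOn_of_tendsto {ι X α : Type*} [TopologicalSpace X]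
    [UniformSpace α] {F : ι → X → α} {f : X → α} {p : Filter ι} {C : Set X}
    (hC : IsCompact C) (hF : EquicontinuousOn F C) (h : ∀ x ∈ C, Tendsto (F · x) p (𝓝 (f x))) :
    TendstoUniformlyOn F f p C := by
  have := (EquicontinuousOn.tendsto_uniformOnFun_iff_pi' (𝔖 := {C}) (by simpa using hC)
    (by simpa using hF) p f).2 (by
      rw [tendsto_pi_nhds]
      rintro ⟨x, hx⟩
      exact h x (by simpa using hx))
  exact (UniformOnFun.tendsto_iff_tendstoUniformlyOn.1 this) C rfl

section

variable {ι κ 𝕜 V E G : Type*} [NontriviallyNormedField 𝕜]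
  [SeminormedAddCommGroup V] [NormedSpace 𝕜 V] [SeminormedAddCommGroup E] [NormedSpace 𝕜 E]
  [SeminormedAddCommGroup G] [NormedSpace 𝕜 G] {p : Filter ι}

theorem ContinuousLinearMap.tendstoUniformlyOn_of_tendsto {T : ι → E →L[𝕜] G} {f : E → G}
    {M : ℝ} (hT : ∀ i, ‖T i‖ ≤ M) {C : Set E} (hC : IsCompact C)
    (h : ∀ x ∈ C, Tendsto (fun i ↦ T i x) p (𝓝 (f x))) :
    TendstoUniformlyOn (fun i ↦ ⇑(T i)) f p C := by
  have hLip : ∀ i, LipschitzWith M.toNNReal (T i) := fun i ↦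
    (T i).lipschitzWith_of_opNorm_le ((hT i).trans (Real.le_coe_toNNReal M))
  exact ((LipschitzWith.uniformEquicontinuous _ _ hLip).equicontinuous.equicontinuousOn C)
    |>.tendstoUniformlyOn_of_tendsto hC h

theorem tendsto_iSup_norm_of_tendstoUniformly {F : ι → κ → E} (h : TendstoUniformly F 0 p) :
    Tendsto (fun i ↦ ⨆ k, ‖F i k‖) p (𝓝 0) := by
  rw [Metric.tendsto_nhds]
  intro ε hε
  filter_upwards [Metric.tendstoUniformly_iff.1 h (ε / 2) (half_pos hε)] with i hi
  have hsup : ⨆ k, ‖F i k‖ ≤ ε / 2 :=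
    Real.iSup_le (fun k ↦ by simpa [dist_eq_norm'] using (hi k).le) (half_pos hε).le
  rw [Real.dist_0_eq_abs, abs_of_nonneg (Real.iSup_nonneg fun k ↦ norm_nonneg _)]
  linarith

theorem ContinuousLinearMap.tendstoUniformly_comp_of_tendstoUniformlyOn [NormedAlgebra ℝ 𝕜]
    {T : ι → E →L[𝕜] G} {L : κ → V →L[𝕜] E} {C : Set E} (hLC : ∀ k v, ‖v‖ = 1 → L k v ∈ C)
    (hT : TendstoUniformlyOn (fun i ↦ ⇑(T i)) 0 p C) :
    TendstoUniformly (fun i k ↦ (T i).comp (L k)) 0 p := by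
  rw [Metric.tendstoUniformly_iff]
  intro ε hε
  filter_upwards [Metric.tendstoUniformlyOn_iff.1 hT (ε / 2) (half_pos hε)] with i hi k
  have : ‖(T i).comp (L k)‖ ≤ ε / 2 := opNorm_le_of_unit_norm (half_pos hε).le fun v hv ↦ by
    simpa [dist_eq_norm'] using (hi _ (hLC k v hv)).le
  rw [Pi.zero_apply, dist_zero_left]
  linarith

end

theorem sN_tendsto_zero_general
    {X Y : Type*} [NormedAddCommGroup X] [NormedSpace ℝ X]
    [NormedAddCommGroup Y] [NormedSpace ℝ Y]
    (A : Set X)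
    (W : Submodule ℝ X) [FiniteDimensional ℝ W]
    (K : Set X) (hKWA : K ⊆ (W : Set X) ∩ A) (hKcomp : IsCompact K)
    (F' : X → X →L[ℝ] Y)
    (hF'cont : ContinuousOn F' A)
    (Q : ℕ → Y →L[ℝ] Y)
    -- Hypothesis 2.2: there is a subspace Ỹ ⊆ Y such that
    (Ytil : Submodule ℝ Y)
    -- (a) for every ξ ∈ K, the range of F'(ξ)|_W is contained in Ỹ;
    (ha : ∀ ξ ∈ K, ∀ w ∈ W, F' ξ w ∈ Ytil)
    -- (b) ‖Q_N‖ ≤ D for some D ≥ 1;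
    (D : ℝ) (hb : ∀ N, ‖Q N‖ ≤ D)
    -- (c) Q_N → I strongly on Ỹ.
    (hc : ∀ y ∈ Ytil, Tendsto (fun N => Q N y) atTop (𝓝 y)) :
    Tendsto
      (fun N => ⨆ ξ : K,
        ‖(ContinuousLinearMap.id ℝ Y - Q N).comp ((F' ξ).comp W.subtypeL)‖)
      atTop (𝓝 0) := by
  have hT : ∀ N, ‖ContinuousLinearMap.id ℝ Y - Q N‖ ≤ 1 + D := fun N ↦
    (norm_sub_le _ _).trans (add_le_add ContinuousLinearMap.norm_id_le (hb N))
  let C : Set Y := (fun q : X × W ↦ F' q.1 q.2) '' (K ×ˢ Metric.sphere 0 1)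
  have hC : IsCompact C := (hKcomp.prod (isCompact_sphere 0 1)).image_of_continuousOn <|
    ((hF'cont.mono fun x hx ↦ (hKWA hx).2).comp continuousOn_fst fun q hq ↦ hq.1).clm_apply
      (continuous_subtype_val.comp continuous_snd).continuousOn
  have hTC : ∀ y ∈ C, Tendsto (fun N ↦ (ContinuousLinearMap.id ℝ Y - Q N) y) atTop (𝓝 0) := by
    rintro _ ⟨⟨ξ, w⟩, ⟨hξ, -⟩, rfl⟩
    simpa using (tendsto_const_nhds (x := F' ξ w)).sub (hc _ (ha ξ hξ w w.2))
  have hLC : ∀ (ξ : K) (w : W), ‖w‖ = 1 → (F' ξ).comp W.subtypeL w ∈ C := fun ξ w hw ↦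
    ⟨(ξ, w), ⟨ξ.2, by simpa using hw⟩, rfl⟩
  have hT_unif := ContinuousLinearMap.tendstoUniformlyOn_of_tendsto hT hC hTC
  have hTF_unif := ContinuousLinearMap.tendstoUniformly_comp_of_tendstoUniformlyOn hLC hT_unif
  exact (tendsto_iSup_norm_of_tendstoUniformly hTF_unif :)

/-- Theorem `theo:main`, part (i): under Hypothesis 2.2, if `W` is
finite-dimensional, then `s_N = sup_{ξ ∈ K} ‖(I_Y - Q_N) F'(ξ)‖_{W → Y} → 0`. -/
theorem sN_tendsto_zero
    {X Y : Type*} [NormedAddCommGroup X] [NormedSpace ℝ X] [CompleteSpace X]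
    [NormedAddCommGroup Y] [NormedSpace ℝ Y] [CompleteSpace Y]
    (A : Set X) (hA : IsOpen A)
    (W : Submodule ℝ X) [FiniteDimensional ℝ W]
    (K : Set X) (hKWA : K ⊆ (W : Set X) ∩ A) (hKcomp : IsCompact K)
    (F : X → Y) (F' : X → X →L[ℝ] Y)
    (hF : ∀ x ∈ A, HasFDerivAt F (F' x) x)
    (hF'cont : ContinuousOn F' A)
    (Q : ℕ → Y →L[ℝ] Y)
    -- Hypothesis 2.2: there is a subspace Ỹ ⊆ Y such that
    (Ytil : Submodule ℝ Y)
    -- (a) for every ξ ∈ K, the range of F'(ξ)|_W is contained in Ỹ;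
    (ha : ∀ ξ ∈ K, ∀ w ∈ W, F' ξ w ∈ Ytil)
    -- (b) ‖Q_N‖ ≤ D for some D ≥ 1;
    (D : ℝ) (hD : 1 ≤ D) (hb : ∀ N, ‖Q N‖ ≤ D)
    -- (c) Q_N → I strongly on Ỹ.
    (hc : ∀ y ∈ Ytil, Tendsto (fun N => Q N y) atTop (𝓝 y)) :
    Tendsto
      (fun N => ⨆ ξ : K,
        ‖(ContinuousLinearMap.id ℝ Y - Q N).comp ((F' ξ).comp W.subtypeL)‖)
      atTop (𝓝 0) :=
  sN_tendsto_zero_general A W K hKWA hKcomp F' hF'cont Q Ytil ha D hb hc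
end

section
/- Let X and Y be Banach spaces, A ⊆ X an open subset, W ⊆ X a subspace, and K ⊆ W ∩ A a compact and convex subset. Let F ∈ C¹(A,Y) be Lipschitz with constant L ≥ 1 on A and satisfy ‖x₁ − x₂‖_X ≤ C ‖F(x₁) − F(x₂)‖_Y for all x₁, x₂ ∈ K, for some C ≥ 1. Let Q_N : Y → Y (N ∈ ℕ) be bounded linear maps satisfying the Hypothesis. If N is such that s_N := sup_{ξ ∈ K} ‖(I_Y − Q_N) ∘ F'(ξ)‖_{W → Y} ≤ 1/(2C), then Q_N ∘ F is injective on K: if x₁, x₂ ∈ K satisfy Q_N(F(x₁)) = Q_N(F(x₂)), then x₁ = x₂. -/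
open Filter Topology

/-- uniqueness with finitely many measurements: under the assumptions of
Theorem `theo:main` part (ii), `Q_N ∘ F` is injective on `K`. -/
theorem uniqueness_finite_measurements
    {X Y : Type*} [NormedAddCommGroup X] [NormedSpace ℝ X] [CompleteSpace X]
    [NormedAddCommGroup Y] [NormedSpace ℝ Y] [CompleteSpace Y]
    (A : Set X) (hA : IsOpen A)
    (W : Submodule ℝ X)
    (K : Set X) (hKWA : K ⊆ (W : Set X) ∩ A)
    (hKcomp : IsCompact K) (hKconv : Convex ℝ K)
    (F : X → Y) (F' : X → X →L[ℝ] Y)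
    (hF : ∀ x ∈ A, HasFDerivAt F (F' x) x)
    (hF'cont : ContinuousOn F' A)
    -- F is Lipschitz on A with constant L ≥ 1
    (L : ℝ) (hL : 1 ≤ L)
    (hFlip : ∀ x₁ ∈ A, ∀ x₂ ∈ A, ‖F x₁ - F x₂‖ ≤ L * ‖x₁ - x₂‖)
    -- Lipschitz stability estimate on K with constant C ≥ 1
    (C : ℝ) (hC : 1 ≤ C)
    (hstab : ∀ x₁ ∈ K, ∀ x₂ ∈ K, ‖x₁ - x₂‖ ≤ C * ‖F x₁ - F x₂‖)
    (Q : ℕ → Y →L[ℝ] Y)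
    -- Hypothesis 2.2: there is a subspace Ỹ ⊆ Y such that
    (Ytil : Submodule ℝ Y)
    (ha : ∀ ξ ∈ K, ∀ w ∈ W, F' ξ w ∈ Ytil)
    (D : ℝ) (hD : 1 ≤ D) (hb : ∀ N, ‖Q N‖ ≤ D)
    (hc : ∀ y ∈ Ytil, Tendsto (fun N => Q N y) atTop (𝓝 y))
    -- N is such that s_N ≤ 1/(2C)
    (N : ℕ)
    (hsN : ∀ ξ ∈ K,
      ‖(ContinuousLinearMap.id ℝ Y - Q N).comp ((F' ξ).comp W.subtypeL)‖ ≤ 1 / (2 * C)) :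
    ∀ x₁ ∈ K, ∀ x₂ ∈ K, Q N (F x₁) = Q N (F x₂) → x₁ = x₂ := by
  intro x₁ hx₁ x₂ hx₂ hQ
  set T : Y →L[ℝ] Y := ContinuousLinearMap.id ℝ Y - Q N with hT
  -- work on W
  set K' : Set W := W.subtypeL ⁻¹' K with hK'
  have hK'conv : Convex ℝ K' := hKconv.linear_preimage (W.subtypeL : W →ₗ[ℝ] X)
  set g : W → Y := fun w => T (F (W.subtypeL w)) with hg
  set g' : W → (W →L[ℝ] Y) := fun w => T.comp ((F' (W.subtypeL w)).comp W.subtypeL) with hg'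
  have hderiv : ∀ w ∈ K', HasFDerivWithinAt g (g' w) K' w := by
    intro w hw
    have hwA : (W.subtypeL w : X) ∈ A := (hKWA hw).2
    exact ((T.hasFDerivAt.comp _ (hF _ hwA)).comp w W.subtypeL.hasFDerivAt).hasFDerivWithinAt
  have hbound : ∀ w ∈ K', ‖g' w‖ ≤ 1 / (2 * C) := fun w hw => hsN _ hw
  have hw₁ : (⟨x₁, (hKWA hx₁).1⟩ : W) ∈ K' := hx₁
  have hw₂ : (⟨x₂, (hKWA hx₂).1⟩ : W) ∈ K' := hx₂
  have hmv := hK'conv.norm_image_sub_le_of_norm_hasFDerivWithin_le hderiv hbound hw₂ hw₁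
  have hnorm : ‖(⟨x₁, (hKWA hx₁).1⟩ : W) - ⟨x₂, (hKWA hx₂).1⟩‖ = ‖x₁ - x₂‖ := rfl
  have hg1 : g ⟨x₁, (hKWA hx₁).1⟩ = F x₁ - Q N (F x₁) := by
    simp [hg, hT, ContinuousLinearMap.sub_apply]
  have hg2 : g ⟨x₂, (hKWA hx₂).1⟩ = F x₂ - Q N (F x₂) := by
    simp [hg, hT, ContinuousLinearMap.sub_apply]
  have hdiff : g ⟨x₁, (hKWA hx₁).1⟩ - g ⟨x₂, (hKWA hx₂).1⟩ = F x₁ - F x₂ := by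
    rw [hg1, hg2, hQ]; abel
  have hkey : ‖F x₁ - F x₂‖ ≤ 1 / (2 * C) * ‖x₁ - x₂‖ := by
    rw [← hdiff]; calc ‖g ⟨x₁, (hKWA hx₁).1⟩ - g ⟨x₂, (hKWA hx₂).1⟩‖
        ≤ 1 / (2 * C) * ‖(⟨x₁, (hKWA hx₁).1⟩ : W) - ⟨x₂, (hKWA hx₂).1⟩‖ := hmv
      _ = 1 / (2 * C) * ‖x₁ - x₂‖ := by rw [hnorm]
  have hC0 : (0:ℝ) < C := lt_of_lt_of_le one_pos hC
  have h2 : ‖x₁ - x₂‖ ≤ C * (1 / (2 * C) * ‖x₁ - x₂‖) :=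
    (hstab x₁ hx₁ x₂ hx₂).trans (by
      exact mul_le_mul_of_nonneg_left hkey (le_of_lt hC0))
  have h3 : C * (1 / (2 * C) * ‖x₁ - x₂‖) = ‖x₁ - x₂‖ / 2 := by
    field_simp
  rw [h3] at h2
  have : ‖x₁ - x₂‖ = 0 := by linarith [norm_nonneg (x₁ - x₂)]
  have := norm_eq_zero.mp this
  exact sub_eq_zero.mp this
end

section
/- Let X and Y be Banach spaces, A ⊆ X an open subset, W ⊆ X a finite-dimensional subspace, and K ⊆ W ∩ A a compact and convex subset. Let F ∈ C¹(A,Y) be such that F|_{W∩A} is injective and F'(x)|_W is injective for every x ∈ W ∩ A. Let Q_N : Y → Y (N ∈ ℕ) be bounded linear maps such that Q_N y → y in Y as N → ∞ for every y ∈ Y. Then there exist N ∈ ℕ and C > 0 such that ‖x₁ − x₂‖_X ≤ C ‖Q_N(F(x₁)) − Q_N(F(x₂))‖_Y for all x₁, x₂ ∈ K. -/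
open Filter Topology

/-!
The difference quotients `‖x₁ - x₂‖⁻¹ • (F x₁ - F x₂)` with `x₁ ≠ x₂` in `K` form a relatively
compact set whose closure avoids `0`. Indeed, along a subsequence the two points converge, either to
distinct limits, where injectivity of `F` applies, or to a common limit `x`, where the strict
differentiability of a `C¹` map turns the quotients into `F' x u` for a unit vector `u ∈ W`, and
injectivity of `F' x` on `W` applies. Since `Q N` is uniformly bounded (Banach–Steinhaus), strong
convergence to the identity is uniform on relatively compact sets, so for large `N` no difference
quotient is shrunk by `Q N` below half the lower bound.
-/

theorem Filter.Tendsto.clm_apply_of_forall_norm_le {𝕜 E F ι : Type*} [NontriviallyNormedField 𝕜]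
    [NormedAddCommGroup E] [NormedSpace 𝕜 E] [NormedAddCommGroup F] [NormedSpace 𝕜 F]
    {l : Filter ι} {T : ι → E →L[𝕜] F} {M : ℝ} (hM : ∀ i, ‖T i‖ ≤ M) {z : E} {z' : F}
    (hT : Tendsto (fun i => T i z) l (𝓝 z')) {w : ι → E} (hw : Tendsto w l (𝓝 z)) :
    Tendsto (fun i => T i (w i)) l (𝓝 z') := by
  have hsmall : Tendsto (fun i => T i (w i - z)) l (𝓝 0) :=
    squeeze_zero_norm (fun i => (T i).le_of_opNorm_le (hM i) _)
      (by simpa using (tendsto_iff_norm_sub_tendsto_zero.1 hw).const_mul M)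
  simpa using hsmall.add hT

section

variable {Y : Type*} [NormedAddCommGroup Y]

theorem exists_pos_le_norm_of_subseq_tendsto_ne_zero {S : Set Y}
    (hS : ∀ y : ℕ → Y, (∀ n, y n ∈ S) →
      ∃ z ≠ 0, ∃ φ : ℕ → ℕ, StrictMono φ ∧ Tendsto (y ∘ φ) atTop (𝓝 z)) :
    ∃ c > 0, ∀ y ∈ S, c ≤ ‖y‖ := by
  have h0 : (0 : Y) ∉ closure S := by
    intro h
    obtain ⟨y, hyS, hy⟩ := mem_closure_iff_seq_limit.1 h
    obtain ⟨z, hz, φ, hφ, hyz⟩ := hS y hyS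
    exact hz (tendsto_nhds_unique hyz (hy.comp hφ.tendsto_atTop))
  simpa [Metric.mem_closure_iff] using h0

theorem exists_forall_norm_apply_sub_le_of_subseq_tendsto [NormedSpace ℝ Y] {S : Set Y}
    (hS : ∀ y : ℕ → Y, (∀ n, y n ∈ S) →
      ∃ z, ∃ φ : ℕ → ℕ, StrictMono φ ∧ Tendsto (y ∘ φ) atTop (𝓝 z))
    {Q : ℕ → Y →L[ℝ] Y} {M : ℝ} (hM : ∀ N, ‖Q N‖ ≤ M)
    (hQ : ∀ y, Tendsto (fun N => Q N y) atTop (𝓝 y)) {ε : ℝ} (hε : 0 < ε) :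
    ∃ N, ∀ y ∈ S, ‖Q N y - y‖ ≤ ε := by
  by_contra! h
  choose y hyS hy using h
  obtain ⟨z, φ, hφ, hyz⟩ := hS y hyS
  have h0 : Tendsto (fun n => Q (φ n) (y (φ n)) - y (φ n)) atTop (𝓝 0) := by
    simpa using
      (((hQ z).comp hφ.tendsto_atTop).clm_apply_of_forall_norm_le (fun n => hM (φ n)) hyz).sub hyz
  obtain ⟨n, hn⟩ := (NormedAddGroup.tendsto_nhds_zero.1 h0 ε hε).exists
  exact lt_asymm hn (hy (φ n))

end

section

variable {X Y : Type*} [NormedAddCommGroup X] [NormedAddCommGroup Y] [NormedSpace ℝ Y]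

noncomputable def diffQuot (F : X → Y) (p : X × X) : Y := ‖p.1 - p.2‖⁻¹ • (F p.1 - F p.2)

theorem smul_diffQuot {F : X → Y} {p : X × X} (hp : p.1 ≠ p.2) :
    ‖p.1 - p.2‖ • diffQuot F p = F p.1 - F p.2 :=
  smul_inv_smul₀ (norm_ne_zero_iff.2 (sub_ne_zero.2 hp)) _

theorem diffQuot_ne_zero {F : X → Y} {p : X × X} (hp : F p.1 ≠ F p.2) : diffQuot F p ≠ 0 :=
  smul_ne_zero (inv_ne_zero (norm_ne_zero_iff.2 (sub_ne_zero.2 fun h => hp (h ▸ rfl))))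
    (sub_ne_zero.2 hp)

theorem continuousAt_diffQuot {F : X → Y} {x y : X} (hx : ContinuousAt F x)
    (hy : ContinuousAt F y) (hxy : x ≠ y) : ContinuousAt (diffQuot F) (x, y) :=
  ((continuous_fst.sub continuous_snd).norm.continuousAt.inv₀
    (norm_ne_zero_iff.2 (sub_ne_zero.2 hxy))).smul
    ((hx.comp continuousAt_fst).sub (hy.comp continuousAt_snd))

theorem norm_sub_le_inv_mul_norm_apply_sub {F : X → Y} {K : Set X} {T : Y →L[ℝ] Y} {c : ℝ}
    (hc : 0 < c) (hT : ∀ p ∈ K.offDiag, c ≤ ‖T (diffQuot F p)‖) :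
    ∀ x₁ ∈ K, ∀ x₂ ∈ K, ‖x₁ - x₂‖ ≤ c⁻¹ * ‖T (F x₁) - T (F x₂)‖ := by
  intro x₁ h₁ x₂ h₂
  rcases eq_or_ne x₁ x₂ with rfl | hne
  · simp
  rw [← map_sub, ← smul_diffQuot (p := (x₁, x₂)) hne, map_smul, norm_smul, norm_norm,
    le_inv_mul_iff₀ hc, mul_comm]
  gcongr
  exact hT (x₁, x₂) ⟨h₁, h₂, hne⟩

variable [NormedSpace ℝ X]

theorem diffQuot_id_mem_inter_sphere {W : Submodule ℝ X} {p : X × X} (h₁ : p.1 ∈ W)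
    (h₂ : p.2 ∈ W) (hp : p.1 ≠ p.2) : diffQuot id p ∈ (W : Set X) ∩ Metric.sphere 0 1 :=
  ⟨W.smul_mem _ (W.sub_mem h₁ h₂), by
    simp [diffQuot, norm_smul, inv_mul_cancel₀ (norm_ne_zero_iff.2 (sub_ne_zero.2 hp))]⟩

theorem HasStrictFDerivAt.tendsto_diffQuot_sub {F : X → Y} {f' : X →L[ℝ] Y} {x : X}
    (hF : HasStrictFDerivAt F f' x) :
    Tendsto (fun p => diffQuot F p - f' (diffQuot id p)) (𝓝 (x, x)) (𝓝 0) :=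
  hF.isLittleO.norm_right.tendsto_inv_smul_nhds_zero.congr fun p => by
    simp only [diffQuot, id]
    rw [map_smul, smul_sub, smul_sub]

theorem Submodule.isCompact_inter_sphere (W : Submodule ℝ X) [FiniteDimensional ℝ W] :
    IsCompact ((W : Set X) ∩ Metric.sphere 0 1) := by
  rw [← Subtype.image_preimage_coe]
  exact (isCompact_sphere (0 : W) 1).image continuous_subtype_val

theorem exists_subseq_tendsto_diffQuot_ne_zero {W : Submodule ℝ X} [FiniteDimensional ℝ W]
    {K : Set X} {F : X → Y} {F' : X → X →L[ℝ] Y} (hK : IsCompact K) (hKW : K ⊆ W)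
    (hF : ∀ x ∈ K, HasStrictFDerivAt F (F' x) x) (hFinj : K.InjOn F)
    (hF'inj : ∀ x ∈ K, Set.InjOn (F' x) W) {y : ℕ → Y} (hy : ∀ n, y n ∈ diffQuot F '' K.offDiag) :
    ∃ z ≠ 0, ∃ φ : ℕ → ℕ, StrictMono φ ∧ Tendsto (y ∘ φ) atTop (𝓝 z) := by
  choose p hpK hpy using hy
  obtain rfl : diffQuot F ∘ p = y := funext hpy
  have hmem : ∀ n, (p n, diffQuot id (p n)) ∈ (K ×ˢ K) ×ˢ ((W : Set X) ∩ Metric.sphere 0 1) :=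
    fun n => ⟨⟨(hpK n).1, (hpK n).2.1⟩,
      diffQuot_id_mem_inter_sphere (hKW (hpK n).1) (hKW (hpK n).2.1) (hpK n).2.2⟩
  obtain ⟨⟨⟨x₁, x₂⟩, u⟩, ⟨⟨hx₁, hx₂⟩, huW, hu₁⟩, φ, hφ, hlim⟩ :=
    ((hK.prod hK).prod W.isCompact_inter_sphere).tendsto_subseq hmem
  have hp : Tendsto (p ∘ φ) atTop (𝓝 (x₁, x₂)) := (continuous_fst.tendsto _).comp hlim
  have hu : Tendsto (diffQuot id ∘ p ∘ φ) atTop (𝓝 u) := (continuous_snd.tendsto _).comp hlim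
  rcases eq_or_ne x₁ x₂ with rfl | hne
  · refine ⟨F' x₁ u, ?_, φ, hφ, ?_⟩
    · simpa using (hF'inj x₁ hx₁).ne huW W.zero_mem (Metric.ne_of_mem_sphere hu₁ one_ne_zero)
    · simpa [Function.comp_def] using ((hF x₁ hx₁).tendsto_diffQuot_sub.comp hp).add
        (((F' x₁).continuous.tendsto u).comp hu)
  · exact ⟨_, diffQuot_ne_zero (hFinj.ne hx₁ hx₂ hne), φ, hφ,
      (continuousAt_diffQuot (hF x₁ hx₁).continuousAt (hF x₂ hx₂).continuousAt hne).tendsto.comp hp⟩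

end

theorem corollary_strong_convergence_general
    {X Y : Type*} [NormedAddCommGroup X] [NormedSpace ℝ X]
    [NormedAddCommGroup Y] [NormedSpace ℝ Y] [CompleteSpace Y]
    (A : Set X) (hA : IsOpen A)
    (W : Submodule ℝ X) [FiniteDimensional ℝ W]
    (K : Set X) (hKWA : K ⊆ (W : Set X) ∩ A)
    (hKcomp : IsCompact K)
    (F : X → Y) (F' : X → X →L[ℝ] Y)
    (hF : ∀ x ∈ A, HasFDerivAt F (F' x) x)
    (hF'cont : ContinuousOn F' A)
    (hFinj : Set.InjOn F ((W : Set X) ∩ A))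
    (hF'inj : ∀ x ∈ (W : Set X) ∩ A, Set.InjOn (F' x) (W : Set X))
    (Q : ℕ → Y →L[ℝ] Y)
    (hQ : ∀ y : Y, Tendsto (fun N => Q N y) atTop (𝓝 y)) :
    ∃ (N : ℕ) (C : ℝ), 0 < C ∧
      ∀ x₁ ∈ K, ∀ x₂ ∈ K, ‖x₁ - x₂‖ ≤ C * ‖Q N (F x₁) - Q N (F x₂)‖ := by
  have hFK : ∀ x ∈ K, HasStrictFDerivAt F (F' x) x := fun x hx =>
    have hAx : A ∈ 𝓝 x := hA.mem_nhds (hKWA hx).2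
    hasStrictFDerivAt_of_hasFDerivAt_of_continuousAt (eventually_of_mem hAx hF)
      (hF'cont.continuousAt hAx)
  have hS (y : ℕ → Y) (hy : ∀ n, y n ∈ diffQuot F '' K.offDiag) :=
    exists_subseq_tendsto_diffQuot_ne_zero hKcomp (fun x hx => (hKWA hx).1) hFK
      (hFinj.mono hKWA) (fun x hx => hF'inj x (hKWA hx)) hy
  obtain ⟨c, hc, hcS⟩ := exists_pos_le_norm_of_subseq_tendsto_ne_zero hS
  obtain ⟨M, hM⟩ := banach_steinhaus fun y =>
    (hQ y).norm.bddAbove_range.imp fun _ hC N => hC ⟨N, rfl⟩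
  obtain ⟨N, hN⟩ := exists_forall_norm_apply_sub_le_of_subseq_tendsto
    (fun y hy => (hS y hy).imp fun _ hz => hz.2) hM hQ (half_pos hc)
  refine ⟨N, (c / 2)⁻¹, by positivity, norm_sub_le_inv_mul_norm_apply_sub (half_pos hc) ?_⟩
  intro p hp
  have hd := hcS _ (Set.mem_image_of_mem _ hp)
  have hQd := hN _ (Set.mem_image_of_mem _ hp)
  linarith [norm_sub_norm_le (diffQuot F p) (Q N (diffQuot F p)),
    norm_sub_rev (diffQuot F p) (Q N (diffQuot F p))]

/-- Corollary `cor:main`, case (a): if `Q_N → I_Y` strongly, then there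
exist `N` and `C > 0` giving Lipschitz stability with finitely many measurements. -/
theorem corollary_strong_convergence
    {X Y : Type*} [NormedAddCommGroup X] [NormedSpace ℝ X] [CompleteSpace X]
    [NormedAddCommGroup Y] [NormedSpace ℝ Y] [CompleteSpace Y]
    (A : Set X) (hA : IsOpen A)
    (W : Submodule ℝ X) [FiniteDimensional ℝ W]
    (K : Set X) (hKWA : K ⊆ (W : Set X) ∩ A)
    (hKcomp : IsCompact K) (hKconv : Convex ℝ K)
    (F : X → Y) (F' : X → X →L[ℝ] Y)
    (hF : ∀ x ∈ A, HasFDerivAt F (F' x) x)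
    (hF'cont : ContinuousOn F' A)
    (hFinj : Set.InjOn F ((W : Set X) ∩ A))
    (hF'inj : ∀ x ∈ (W : Set X) ∩ A, Set.InjOn (F' x) (W : Set X))
    (Q : ℕ → Y →L[ℝ] Y)
    (hQ : ∀ y : Y, Tendsto (fun N => Q N y) atTop (𝓝 y)) :
    ∃ (N : ℕ) (C : ℝ), 0 < C ∧
      ∀ x₁ ∈ K, ∀ x₂ ∈ K, ‖x₁ - x₂‖ ≤ C * ‖Q N (F x₁) - Q N (F x₂)‖ :=
  corollary_strong_convergence_general A hA W K hKWA hKcomp F F' hF hF'cont hFinj hF'inj Q hQ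
end

section
/- Let Y¹ and Y² be Banach spaces, T : Y¹ → Y² a compact bounded linear operator, and P¹_N : Y¹ → Y¹, P²_N : Y² → Y² (N ∈ ℕ) bounded linear operators such that P²_N y → y in Y² for every y ∈ Y² and the adjoints satisfy (P¹_N)* φ → φ in the dual of Y¹ for every continuous linear functional φ on Y¹. Then ‖T − P²_N ∘ T ∘ P¹_N‖_{L_c(Y¹,Y²)} → 0 as N → ∞. -/
open Filter Topology Metric

/-- Strong convergence to `0` is uniform on totally bounded sets. -/
lemma eventually_uniform_on_totallyBounded
    {E F : Type*} [NormedAddCommGroup E] [NormedSpace ℝ E] [CompleteSpace E]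
    [NormedAddCommGroup F] [NormedSpace ℝ F]
    (S : ℕ → E →L[ℝ] F) (hS : ∀ x, Tendsto (fun N => S N x) atTop (𝓝 0))
    {A : Set E} (hA : TotallyBounded A) {ε : ℝ} (hε : 0 < ε) :
    ∀ᶠ N in atTop, ∀ x ∈ A, ‖S N x‖ ≤ ε := by
  have hbd : ∀ x, ∃ C, ∀ i, ‖S i x‖ ≤ C := by
    intro x
    have h1 : Tendsto (fun N => ‖S N x‖) atTop (𝓝 ‖(0 : F)‖) := (hS x).norm
    obtain ⟨C, hC⟩ := h1.bddAbove_range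
    exact ⟨C, fun i => hC ⟨i, rfl⟩⟩
  obtain ⟨C, hC⟩ := banach_steinhaus hbd
  have hC0 : 0 ≤ C := le_trans (norm_nonneg _) (hC 0)
  have hC1 : (0:ℝ) < C + 1 := by linarith
  set δ : ℝ := ε / (2 * (C + 1)) with hδ
  have hδ0 : 0 < δ := by positivity
  obtain ⟨t, htf, htc⟩ := Metric.totallyBounded_iff.1 hA δ hδ0
  have hev : ∀ᶠ N in atTop, ∀ y ∈ t, ‖S N y‖ ≤ ε / 2 := by
    rw [eventually_all_finite htf]
    intro y _
    have h1 : Tendsto (fun N => ‖S N y‖) atTop (𝓝 0) := by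
      simpa using (hS y).norm
    exact (h1.eventually_lt_const (half_pos hε)).mono fun N hN => hN.le
  filter_upwards [hev] with N hN x hx
  obtain ⟨y, hy, hxy⟩ := Set.mem_iUnion₂.1 (htc hx)
  have hxy' : ‖x - y‖ < δ := by rwa [← dist_eq_norm]
  have h1 : ‖S N x - S N y‖ ≤ C * δ := by
    rw [← map_sub]
    calc ‖S N (x - y)‖ ≤ ‖S N‖ * ‖x - y‖ := (S N).le_opNorm _
      _ ≤ C * δ := by
          apply mul_le_mul (hC N) hxy'.le (norm_nonneg _) hC0
  have h2 : C * δ ≤ ε / 2 := by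
    rw [hδ, mul_div_assoc', div_le_div_iff₀ (by positivity) (by norm_num)]
    nlinarith
  calc ‖S N x‖ = ‖(S N x - S N y) + S N y‖ := by congr 1; abel
    _ ≤ ‖S N x - S N y‖ + ‖S N y‖ := norm_add_le _ _
    _ ≤ ε / 2 + ε / 2 := add_le_add (h1.trans h2) (hN y hy)
    _ = ε := by ring

/-- Schauder-type lemma: the image of the dual unit ball under precomposition with a
compact operator is totally bounded. -/
lemma totallyBounded_dual_image
    {Y₁ Y₂ : Type*} [NormedAddCommGroup Y₁] [NormedSpace ℝ Y₁]
    [NormedAddCommGroup Y₂] [NormedSpace ℝ Y₂]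
    (T : Y₁ →L[ℝ] Y₂) (hT : IsCompactOperator T) :
    TotallyBounded ((fun ψ : Y₂ →L[ℝ] ℝ => ψ.comp T) '' Metric.closedBall 0 1) := by
  rw [Metric.totallyBounded_iff]
  intro ε hε
  set δ : ℝ := ε / 4 with hδdef
  have hδ0 : 0 < δ := by positivity
  obtain ⟨K, hK, hTK⟩ := hT.image_closedBall_subset_compact (1 : ℝ)
  obtain ⟨s, hsfin, hsc⟩ := Metric.totallyBounded_iff.1 hK.totallyBounded δ hδ0
  haveI : Fintype s := hsfin.fintype
  set L : (Y₂ →L[ℝ] ℝ) →L[ℝ] (s → ℝ) :=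
    ContinuousLinearMap.pi (fun y : s => ContinuousLinearMap.apply ℝ ℝ (y : Y₂)) with hLdef
  have hB : TotallyBounded (L '' Metric.closedBall 0 1) := by
    have himg : L '' Metric.closedBall 0 1 ⊆ Metric.closedBall (0 : s → ℝ) ‖L‖ := by
      rintro _ ⟨ψ, hψ, rfl⟩
      rw [mem_closedBall_zero_iff]
      calc ‖L ψ‖ ≤ ‖L‖ * ‖ψ‖ := L.le_opNorm ψ
        _ ≤ ‖L‖ * 1 := by
            have h1 : ‖ψ‖ ≤ 1 := mem_closedBall_zero_iff.1 hψ
            nlinarith [norm_nonneg L]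
        _ = ‖L‖ := mul_one _
    exact TotallyBounded.subset himg (isCompact_closedBall _ _).totallyBounded
  obtain ⟨t, hts, htf, htc⟩ := totallyBounded_iff_subset.1 hB _ (Metric.dist_mem_uniformity hδ0)
  have hch : ∀ z : s → ℝ, ∃ ψ : Y₂ →L[ℝ] ℝ,
      z ∈ t → ψ ∈ Metric.closedBall (0 : Y₂ →L[ℝ] ℝ) 1 ∧ L ψ = z := by
    intro z
    by_cases hz : z ∈ t
    · obtain ⟨ψ, hψ, hLψ⟩ := hts hz
      exact ⟨ψ, fun _ => ⟨hψ, hLψ⟩⟩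
    · exact ⟨0, fun h => absurd h hz⟩
  choose g hg using hch
  refine ⟨(fun z => (g z).comp T) '' t, htf.image _, ?_⟩
  rintro _ ⟨ψ, hψ, rfl⟩
  have hLψ : L ψ ∈ L '' Metric.closedBall 0 1 := ⟨ψ, hψ, rfl⟩
  obtain ⟨z, hz, hdz⟩ := Set.mem_iUnion₂.1 (htc hLψ)
  obtain ⟨hgz, hLgz⟩ := hg z hz
  have hdist : ∀ y : s, |ψ (y : Y₂) - (g z) (y : Y₂)| < δ := by
    intro y
    have h1 : dist (L ψ) (L (g z)) < δ := by rw [hLgz]; exact hdz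
    have := (dist_pi_lt_iff hδ0).1 h1 y
    simpa [hLdef, Real.dist_eq] using this
  apply Set.mem_iUnion₂.2
  refine ⟨(g z).comp T, ⟨z, hz, rfl⟩, ?_⟩
  rw [mem_ball, dist_eq_norm]
  have hkey : ‖ψ.comp T - (g z).comp T‖ ≤ 3 * δ := by
    rw [← ContinuousLinearMap.sub_comp]
    apply ContinuousLinearMap.opNorm_le_of_unit_norm (by positivity)
    intro x hx
    have hTx : T x ∈ K := hTK ⟨x, by simp [mem_closedBall_zero_iff, hx], rfl⟩
    obtain ⟨y, hy, hTxy⟩ := Set.mem_iUnion₂.1 (hsc hTx)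
    have hnψ : ‖ψ - g z‖ ≤ 2 := by
      calc ‖ψ - g z‖ ≤ ‖ψ‖ + ‖g z‖ := norm_sub_le _ _
        _ ≤ 1 + 1 := add_le_add (mem_closedBall_zero_iff.1 hψ) (mem_closedBall_zero_iff.1 hgz)
        _ = 2 := by norm_num
    have h1 : ‖(ψ - g z) (T x) - (ψ - g z) y‖ ≤ 2 * δ := by
      rw [← map_sub]
      calc ‖(ψ - g z) (T x - y)‖ ≤ ‖ψ - g z‖ * ‖T x - y‖ := (ψ - g z).le_opNorm _
        _ ≤ 2 * δ := by
            apply mul_le_mul hnψ _ (norm_nonneg _) (by norm_num)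
            rw [← dist_eq_norm]; exact (mem_ball.1 hTxy).le
    have h2 : ‖(ψ - g z) y‖ ≤ δ := by
      have := hdist ⟨y, hy⟩
      simpa [Real.norm_eq_abs, ContinuousLinearMap.sub_apply] using this.le
    calc ‖((ψ - g z).comp T) x‖ = ‖((ψ - g z) (T x) - (ψ - g z) y) + (ψ - g z) y‖ := by
          simp [ContinuousLinearMap.comp_apply]
      _ ≤ ‖(ψ - g z) (T x) - (ψ - g z) y‖ + ‖(ψ - g z) y‖ := norm_add_le _ _
      _ ≤ 2 * δ + δ := add_le_add h1 h2
      _ = 3 * δ := by ring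
  calc ‖ψ.comp T - (g z).comp T‖ ≤ 3 * δ := hkey
    _ < ε := by rw [hδdef]; linarith

/-- estimate `eq:RN`: if `T` is compact, `P²_N → I` strongly and
`(P¹_N)* → I` strongly on the dual, then `‖T - P²_N T P¹_N‖ → 0`. -/
theorem compact_operator_projection_approx
    {Y₁ Y₂ : Type*}
    [NormedAddCommGroup Y₁] [NormedSpace ℝ Y₁] [CompleteSpace Y₁]
    [NormedAddCommGroup Y₂] [NormedSpace ℝ Y₂] [CompleteSpace Y₂]
    (T : Y₁ →L[ℝ] Y₂) (hT : IsCompactOperator T)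
    (P₁ : ℕ → Y₁ →L[ℝ] Y₁) (P₂ : ℕ → Y₂ →L[ℝ] Y₂)
    (hP₂ : ∀ y : Y₂, Tendsto (fun N => P₂ N y) atTop (𝓝 y))
    (hP₁ : ∀ φ : Y₁ →L[ℝ] ℝ, Tendsto (fun N => φ.comp (P₁ N)) atTop (𝓝 φ)) :
    Tendsto (fun N => ‖T - (P₂ N).comp (T.comp (P₁ N))‖) atTop (𝓝 0) := by
  -- S₂ N = I - P₂ N, strongly → 0
  set S₂ : ℕ → Y₂ →L[ℝ] Y₂ := fun N => ContinuousLinearMap.id ℝ Y₂ - P₂ N with hS₂def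
  have hS₂ : ∀ y, Tendsto (fun N => S₂ N y) atTop (𝓝 0) := by
    intro y
    have h0 : Tendsto (fun _ : ℕ => y) atTop (𝓝 y) := tendsto_const_nhds
    have := h0.sub (hP₂ y)
    simpa [hS₂def] using this
  -- S₁ N = I - (P₁ N)* on the dual, strongly → 0
  set S₁ : ℕ → (Y₁ →L[ℝ] ℝ) →L[ℝ] (Y₁ →L[ℝ] ℝ) := fun N =>
    ContinuousLinearMap.id ℝ (Y₁ →L[ℝ] ℝ) - (ContinuousLinearMap.compL ℝ Y₁ Y₁ ℝ).flip (P₁ N)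
    with hS₁def
  have hS₁app : ∀ N (φ : Y₁ →L[ℝ] ℝ), S₁ N φ = φ - φ.comp (P₁ N) := by
    intro N φ; rfl
  have hS₁ : ∀ φ, Tendsto (fun N => S₁ N φ) atTop (𝓝 0) := by
    intro φ
    have h0 : Tendsto (fun _ : ℕ => φ) atTop (𝓝 φ) := tendsto_const_nhds
    have := h0.sub (hP₁ φ)
    simp only [sub_self] at this
    simpa [hS₁app] using this
  -- the two totally bounded sets
  have hA₂ : TotallyBounded (T '' Metric.closedBall 0 1) := by
    exact TotallyBounded.subset subset_closure
      (hT.isCompact_closure_image_closedBall (1 : ℝ)).totallyBounded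
  have hA₁ : TotallyBounded ((fun ψ : Y₂ →L[ℝ] ℝ => ψ.comp T) '' Metric.closedBall 0 1) :=
    totallyBounded_dual_image T hT
  -- uniform bound on P₂
  have hbd : ∀ y, ∃ C, ∀ i, ‖P₂ i y‖ ≤ C := by
    intro y
    obtain ⟨C, hC⟩ := ((hP₂ y).norm).bddAbove_range
    exact ⟨C, fun i => hC ⟨i, rfl⟩⟩
  obtain ⟨C, hC⟩ := banach_steinhaus hbd
  have hC0 : 0 ≤ C := le_trans (norm_nonneg _) (hC 0)
  have hC1 : (0:ℝ) < C + 1 := by linarith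
  -- main estimate
  have key : ∀ ε > (0:ℝ), ∀ᶠ N in atTop, ‖T - (P₂ N).comp (T.comp (P₁ N))‖ ≤ ε := by
    intro ε hε
    have hε2 : 0 < ε / 2 := by positivity
    have hε2' : 0 < ε / (2 * (C + 1)) := by positivity
    filter_upwards [eventually_uniform_on_totallyBounded S₂ hS₂ hA₂ hε2,
      eventually_uniform_on_totallyBounded S₁ hS₁ hA₁ hε2'] with N h2 h1
    apply ContinuousLinearMap.opNorm_le_of_unit_norm hε.le
    intro x hx
    have hxball : x ∈ Metric.closedBall (0:Y₁) 1 := by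
      simp [mem_closedBall_zero_iff, hx]
    -- first piece : ‖T x - P₂ N (T x)‖ ≤ ε/2
    have hfirst : ‖T x - P₂ N (T x)‖ ≤ ε / 2 := by
      have := h2 (T x) ⟨x, hxball, rfl⟩
      simpa [hS₂def] using this
    -- second piece : ‖T x - T (P₁ N x)‖ ≤ ε/(2(C+1)) via duality
    have hsecond : ‖T x - T (P₁ N x)‖ ≤ ε / (2 * (C + 1)) := by
      apply NormedSpace.norm_le_dual_bound ℝ _ hε2'.le
      intro ψ
      rcases eq_or_ne ψ 0 with rfl | hψ0
      · simp
      · have hψnorm : (0:ℝ) < ‖ψ‖ := norm_pos_iff.2 hψ0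
        set ψ' : Y₂ →L[ℝ] ℝ := ‖ψ‖⁻¹ • ψ with hψ'def
        have hψ'norm : ‖ψ'‖ = 1 := norm_smul_inv_norm hψ0
        have hψ'ball : ψ' ∈ Metric.closedBall (0 : Y₂ →L[ℝ] ℝ) 1 :=
          mem_closedBall_zero_iff.2 hψ'norm.le
        have h1' : ‖S₁ N (ψ'.comp T)‖ ≤ ε / (2 * (C + 1)) :=
          h1 (ψ'.comp T) ⟨ψ', hψ'ball, rfl⟩
        have happ : ψ' (T x) - ψ' (T (P₁ N x)) = (S₁ N (ψ'.comp T)) x := by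
          rw [hS₁app]
          simp [ContinuousLinearMap.sub_apply, ContinuousLinearMap.comp_apply]
        have hest : ‖ψ' (T x - T (P₁ N x))‖ ≤ ε / (2 * (C + 1)) := by
          rw [map_sub, happ]
          calc ‖(S₁ N (ψ'.comp T)) x‖ ≤ ‖S₁ N (ψ'.comp T)‖ * ‖x‖ :=
                (S₁ N (ψ'.comp T)).le_opNorm x
            _ = ‖S₁ N (ψ'.comp T)‖ := by rw [hx, mul_one]
            _ ≤ ε / (2 * (C + 1)) := h1'
        have hψeq : ψ (T x - T (P₁ N x)) = ‖ψ‖ * ψ' (T x - T (P₁ N x)) := by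
          rw [hψ'def]
          simp only [ContinuousLinearMap.smul_apply, smul_eq_mul]
          rw [← mul_assoc, mul_inv_cancel₀ hψnorm.ne', one_mul]
        rw [hψeq, norm_mul, norm_norm, mul_comm]
        exact mul_le_mul_of_nonneg_right hest (norm_nonneg ψ)
    -- combine
    have hsplit : (T - (P₂ N).comp (T.comp (P₁ N))) x
        = (T x - P₂ N (T x)) + P₂ N (T x - T (P₁ N x)) := by
      simp [ContinuousLinearMap.sub_apply, ContinuousLinearMap.comp_apply, map_sub]
    rw [hsplit]
    calc ‖(T x - P₂ N (T x)) + P₂ N (T x - T (P₁ N x))‖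
        ≤ ‖T x - P₂ N (T x)‖ + ‖P₂ N (T x - T (P₁ N x))‖ := norm_add_le _ _
      _ ≤ ε / 2 + (C + 1) * (ε / (2 * (C + 1))) := by
          apply add_le_add hfirst
          calc ‖P₂ N (T x - T (P₁ N x))‖ ≤ ‖P₂ N‖ * ‖T x - T (P₁ N x)‖ :=
                (P₂ N).le_opNorm _
            _ ≤ (C + 1) * (ε / (2 * (C + 1))) := by
                apply mul_le_mul (by linarith [hC N]) hsecond (norm_nonneg _) (by linarith)
      _ = ε := by field_simp; ring
  -- conclude
  rw [NormedAddCommGroup.tendsto_nhds_zero]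
  intro ε hε
  filter_upwards [key (ε / 2) (by positivity)] with N hN
  rw [Real.norm_eq_abs, abs_of_nonneg (norm_nonneg _)]
  linarith
end

section
/- Let X and Y be Hilbert spaces, A ⊆ X an open set, K ⊆ A a compact set, and F : A → Y a C¹ map such that (1) F' : A → L_c(X,Y) is Lipschitz, i.e. ‖F'(x₁) − F'(x₂)‖_{X→Y} ≤ L ‖x₁ − x₂‖_X for all x₁, x₂ ∈ A and some L > 0, and (2) ‖x₁ − x₂‖_X ≤ C ‖F(x₁) − F(x₂)‖_Y for all x₁, x₂ ∈ A and some C > 0. Then there exist ρ, c, μ ∈ (0,1) such that for every x† ∈ K with y := F(x†) and every x₀ ∈ K with ‖x† − x₀‖_X < ρ, the Landweber iterates defined by x_{k+1} = x_k − μ F'(x_k)* (F(x_k) − y) remain in A, are well defined for all k ∈ ℕ, and satisfy ‖x† − x_k‖_X ≤ ρ c^k for every k ∈ ℕ; in particular x_k → x†. -/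
/-!
For the current iterate `z` write `e = x† - z` for the error and `r = F z - F x†` for the
residual. One Landweber step turns the error into `e + μ F'(z)* r`, and
`⟪e, F'(z)* r⟫ = ⟪F'(z) e + r, r⟫ - ‖r‖²`. The linearisation error `F'(z) e + r` is at most
`L ‖e‖²` because `F'` is Lipschitz, and `‖e‖ ≤ C ‖r‖` by stability; hence for `‖e‖ ≤ ρ` with
`L ρ C ≤ 1/2` the inner product is at most `-‖r‖²/2`. If moreover `μ ‖F'(z)‖² ≤ 1/2`, then
`‖e + μ F'(z)* r‖² ≤ ‖e‖² - μ ‖r‖² / 2 ≤ (1 - μ / (2 C²)) ‖e‖²`, a contraction of the error by a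
fixed factor. Compactness of `K` gives a radius `ρ` whose balls around `K` stay in `A` and a
uniform bound on `‖F'‖` there, so `ρ`, `μ` and the rate do not depend on `x†`.
-/

open Filter Topology Metric ContinuousLinearMap

theorem norm_image_sub_sub_fderiv_le_of_lipschitz {E F : Type*} [NormedAddCommGroup E]
    [NormedSpace ℝ E] [NormedAddCommGroup F] [NormedSpace ℝ F] {f : E → F}
    {f' : E → E →L[ℝ] F} {s : Set E} {L : ℝ} {x y : E} (hL : 0 ≤ L)
    (hf : ∀ z ∈ s, HasFDerivAt f (f' z) z)
    (hlip : ∀ z₁ ∈ s, ∀ z₂ ∈ s, ‖f' z₁ - f' z₂‖ ≤ L * ‖z₁ - z₂‖) (hxy : segment ℝ x y ⊆ s) :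
    ‖f y - f x - f' x (y - x)‖ ≤ L * ‖y - x‖ ^ 2 := by
  have hx : x ∈ segment ℝ x y := left_mem_segment ℝ x y
  have bound : ∀ z ∈ segment ℝ x y, ‖f' z - f' x‖ ≤ L * ‖y - x‖ := fun z hz => by
    have hzx : dist z x ≤ dist y x := by
      have := dist_add_dist_of_mem_segment hz
      rw [dist_comm z x, dist_comm y x]
      linarith [dist_nonneg (x := z) (y := y)]
    calc ‖f' z - f' x‖ ≤ L * ‖z - x‖ := hlip z (hxy hz) x (hxy hx)
      _ ≤ L * ‖y - x‖ := by simpa only [dist_eq_norm] using mul_le_mul_of_nonneg_left hzx hL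
  have := (convex_segment x y).norm_image_sub_le_of_norm_hasFDerivWithin_le'
    (fun z hz => (hf z (hxy hz)).hasFDerivWithinAt) bound hx (right_mem_segment ℝ x y)
  rwa [sq, ← mul_assoc]

theorem dist_iterate_le_geometric {α : Type*} [PseudoMetricSpace α] {g : α → α} {p x₀ : α}
    {ρ c : ℝ} (hc₀ : 0 ≤ c) (hc₁ : c ≤ 1)
    (hg : ∀ z ∈ closedBall p ρ, dist p (g z) ≤ c * dist p z) (hx₀ : dist p x₀ ≤ ρ) (k : ℕ) :
    dist p (g^[k] x₀) ≤ ρ * c ^ k := by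
  induction k with
  | zero => simpa using hx₀
  | succ k ih =>
    have hk : g^[k] x₀ ∈ closedBall p ρ := mem_closedBall'.2 <|
      ih.trans (mul_le_of_le_one_right (dist_nonneg.trans hx₀) (pow_le_one₀ hc₀ hc₁))
    calc dist p (g^[k + 1] x₀) ≤ c * dist p (g^[k] x₀) := by
          rw [Function.iterate_succ_apply']; exact hg _ hk
      _ ≤ c * (ρ * c ^ k) := by gcongr
      _ = ρ * c ^ (k + 1) := by ring

theorem tendsto_of_dist_le_geometric {α : Type*} [PseudoMetricSpace α] {u : ℕ → α} {p : α}
    {ρ c : ℝ} (hc₀ : 0 ≤ c) (hc₁ : c < 1) (hu : ∀ k, dist p (u k) ≤ ρ * c ^ k) :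
    Tendsto u atTop (𝓝 p) := by
  rw [tendsto_iff_dist_tendsto_zero]
  refine squeeze_zero (fun _ => dist_nonneg) (fun k => dist_comm p (u k) ▸ hu k) ?_
  simpa using (tendsto_pow_atTop_nhds_zero_of_lt_one hc₀ hc₁).const_mul ρ

theorem exists_landweber_radius {δ L C : ℝ} (hδ : 0 < δ) (hL : 0 < L) (hC : 0 < C) :
    ∃ ρ ∈ Set.Ioo (0 : ℝ) 1, ρ ≤ δ ∧ L * ρ * C ≤ 1 / 2 := by
  refine ⟨min δ (min (1 / 2) (1 / (2 * L * C))), ⟨lt_min hδ (lt_min (by norm_num) (by positivity)),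
    (min_le_right _ _).trans_lt ((min_le_left _ _).trans_lt (by norm_num))⟩, min_le_left _ _, ?_⟩
  calc L * min δ (min (1 / 2) (1 / (2 * L * C))) * C
        = L * C * min δ (min (1 / 2) (1 / (2 * L * C))) := by ring
    _ ≤ L * C * (1 / (2 * L * C)) := by gcongr; exact (min_le_right _ _).trans (min_le_right _ _)
    _ = 1 / 2 := by field_simp

theorem exists_landweber_step_size {M C : ℝ} (hM : 0 < M) (hC : 0 < C) :
    ∃ μ ∈ Set.Ioo (0 : ℝ) 1, μ * M ^ 2 ≤ 1 / 2 ∧ √(1 - μ / (2 * C ^ 2)) ∈ Set.Ioo (0 : ℝ) 1 := by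
  set μ := min (1 / 2) (min (1 / (2 * M ^ 2)) (C ^ 2))
  have hμ : 0 < μ := lt_min (by norm_num) (lt_min (by positivity) (by positivity))
  have hμC : μ < 2 * C ^ 2 :=
    (min_le_right _ _).trans_lt ((min_le_right _ _).trans_lt (by nlinarith))
  refine ⟨μ, ⟨hμ, (min_le_left _ _).trans_lt (by norm_num)⟩, ?_, ?_, ?_⟩
  · calc μ * M ^ 2 ≤ 1 / (2 * M ^ 2) * M ^ 2 := by
          gcongr; exact (min_le_right _ _).trans (min_le_left _ _)
      _ = 1 / 2 := by field_simp
  · exact Real.sqrt_pos.2 (sub_pos.2 ((div_lt_one (by positivity)).2 hμC))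
  · exact (Real.sqrt_lt' one_pos).2 (by simp only [one_pow, sub_lt_self_iff]; positivity)

theorem exists_pos_bound_norm_near_compact {E G : Type*} [SeminormedAddCommGroup E]
    [SeminormedAddCommGroup G] {f : E → G} {A K : Set E} {L : ℝ} (hK : IsCompact K) (hKA : K ⊆ A)
    (hL : 0 ≤ L) (hlip : ∀ x₁ ∈ A, ∀ x₂ ∈ A, ‖f x₁ - f x₂‖ ≤ L * ‖x₁ - x₂‖) :
    ∃ M > 0, ∀ p ∈ K, ∀ z ∈ A, z ∈ closedBall p 1 → ‖f z‖ ≤ M := by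
  obtain ⟨M₀, hM₀⟩ := hK.exists_bound_of_continuousOn
    ((LipschitzOnWith.of_dist_le' (f := f) (K := L)
      (by simpa only [dist_eq_norm] using hlip)).continuousOn.mono hKA)
  refine ⟨|M₀| + L + 1, add_pos_of_nonneg_of_pos (add_nonneg (abs_nonneg _) hL) one_pos,
    fun p hp z hz hzp => ?_⟩
  calc ‖f z‖ ≤ ‖f p‖ + ‖f z - f p‖ := norm_le_norm_add_norm_sub' _ _
    _ ≤ |M₀| + L * 1 := add_le_add ((hM₀ p hp).trans (le_abs_self _))
        ((hlip z hz p (hKA hp)).trans (by gcongr; exact mem_closedBall_iff_norm.1 hzp))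
    _ ≤ |M₀| + L + 1 := by linarith

section Hilbert

variable {X Y : Type*} [NormedAddCommGroup X] [InnerProductSpace ℝ X] [CompleteSpace X]
  [NormedAddCommGroup Y] [InnerProductSpace ℝ Y] [CompleteSpace Y]

theorem inner_adjoint_le_neg_half_sq (T : X →L[ℝ] Y) {e : X} {r : Y} {η C : ℝ}
    (hlin : ‖T e + r‖ ≤ η * ‖e‖) (hstab : ‖e‖ ≤ C * ‖r‖) (hη : 0 ≤ η) (hηC : η * C ≤ 1 / 2) :
    inner ℝ e (adjoint T r) ≤ -(1 / 2) * ‖r‖ ^ 2 := by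
  have hsplit : inner ℝ e (adjoint T r) = inner ℝ (T e + r) r - ‖r‖ ^ 2 := by
    rw [adjoint_inner_right, inner_add_left, real_inner_self_eq_norm_sq]; ring
  calc inner ℝ e (adjoint T r) ≤ ‖T e + r‖ * ‖r‖ - ‖r‖ ^ 2 := by
        rw [hsplit]; gcongr; exact real_inner_le_norm _ _
    _ ≤ η * (C * ‖r‖) * ‖r‖ - ‖r‖ ^ 2 := by gcongr; exact hlin.trans (by gcongr)
    _ = η * C * ‖r‖ ^ 2 - ‖r‖ ^ 2 := by ring
    _ ≤ 1 / 2 * ‖r‖ ^ 2 - ‖r‖ ^ 2 := by gcongr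
    _ = -(1 / 2) * ‖r‖ ^ 2 := by ring

theorem norm_add_smul_adjoint_sq_le (T : X →L[ℝ] Y) {e : X} {r : Y} {η C M μ : ℝ}
    (hlin : ‖T e + r‖ ≤ η * ‖e‖) (hstab : ‖e‖ ≤ C * ‖r‖) (hη : 0 ≤ η) (hηC : η * C ≤ 1 / 2)
    (hC : 0 < C) (hT : ‖T‖ ≤ M) (hμ : 0 ≤ μ) (hμM : μ * M ^ 2 ≤ 1 / 2) :
    ‖e + μ • adjoint T r‖ ^ 2 ≤ (1 - μ / (2 * C ^ 2)) * ‖e‖ ^ 2 := by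
  have hinner := inner_adjoint_le_neg_half_sq T hlin hstab hη hηC
  have hTr : ‖adjoint T r‖ ≤ M * ‖r‖ :=
    (le_opNorm _ _).trans (by rw [LinearIsometryEquiv.norm_map]; gcongr)
  have hres : ‖e‖ ^ 2 / C ^ 2 ≤ ‖r‖ ^ 2 := by
    rw [div_le_iff₀ (by positivity), mul_comm, ← mul_pow]
    gcongr
  calc ‖e + μ • adjoint T r‖ ^ 2
        = ‖e‖ ^ 2 + 2 * μ * inner ℝ e (adjoint T r) + μ ^ 2 * ‖adjoint T r‖ ^ 2 := by
          rw [norm_add_sq_real, inner_smul_right, norm_smul, Real.norm_of_nonneg hμ]; ring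
    _ ≤ ‖e‖ ^ 2 + 2 * μ * (-(1 / 2) * ‖r‖ ^ 2) + μ ^ 2 * (M * ‖r‖) ^ 2 := by gcongr
    _ = ‖e‖ ^ 2 - μ * ‖r‖ ^ 2 + μ * (μ * M ^ 2) * ‖r‖ ^ 2 := by ring
    _ ≤ ‖e‖ ^ 2 - μ * ‖r‖ ^ 2 + μ * (1 / 2) * ‖r‖ ^ 2 := by gcongr
    _ = ‖e‖ ^ 2 - μ / 2 * ‖r‖ ^ 2 := by ring
    _ ≤ ‖e‖ ^ 2 - μ / 2 * (‖e‖ ^ 2 / C ^ 2) := by gcongr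
    _ = (1 - μ / (2 * C ^ 2)) * ‖e‖ ^ 2 := by field_simp

variable {A : Set X} {F : X → Y} {F' : X → X →L[ℝ] Y} {L C : ℝ}

theorem dist_landweber_step_le (hF : ∀ x ∈ A, HasFDerivAt F (F' x) x)
    (hF'lip : ∀ x₁ ∈ A, ∀ x₂ ∈ A, ‖F' x₁ - F' x₂‖ ≤ L * ‖x₁ - x₂‖)
    (hstab : ∀ x₁ ∈ A, ∀ x₂ ∈ A, ‖x₁ - x₂‖ ≤ C * ‖F x₁ - F x₂‖) (hL : 0 ≤ L) (hC : 0 < C)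
    {p z : X} {ρ M μ : ℝ} (hball : closedBall p ρ ⊆ A) (hz : z ∈ closedBall p ρ)
    (hρ : L * ρ * C ≤ 1 / 2) (hM : ‖F' z‖ ≤ M) (hμ : 0 ≤ μ) (hμM : μ * M ^ 2 ≤ 1 / 2) :
    dist p (z - μ • adjoint (F' z) (F z - F p)) ≤ √(1 - μ / (2 * C ^ 2)) * dist p z := by
  have hp : p ∈ closedBall p ρ := mem_closedBall_self (dist_nonneg.trans hz)
  have hzρ : ‖p - z‖ ≤ ρ := mem_closedBall_iff_norm'.1 hz
  have hlin : ‖F' z (p - z) + (F z - F p)‖ ≤ L * ρ * ‖p - z‖ := by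
    have htaylor := norm_image_sub_sub_fderiv_le_of_lipschitz hL hF hF'lip
      (((convex_closedBall p ρ).segment_subset hz hp).trans hball)
    calc ‖F' z (p - z) + (F z - F p)‖ = ‖F p - F z - F' z (p - z)‖ := by
          rw [← norm_neg]; congr 1; abel
      _ ≤ L * ‖p - z‖ * ‖p - z‖ := by rwa [mul_assoc, ← sq]
      _ ≤ L * ρ * ‖p - z‖ := by gcongr
  have hstab' : ‖p - z‖ ≤ C * ‖F z - F p‖ :=
    norm_sub_rev (F p) (F z) ▸ hstab p (hball hp) z (hball hz)
  have hsq := norm_add_smul_adjoint_sq_le (F' z) hlin hstab'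
    (mul_nonneg hL (dist_nonneg.trans hz)) hρ hC hM hμ hμM
  rw [dist_eq_norm, dist_eq_norm, show p - (z - μ • adjoint (F' z) (F z - F p)) =
    p - z + μ • adjoint (F' z) (F z - F p) by abel, ← Real.sqrt_sq (norm_nonneg (p - z)),
    ← Real.sqrt_mul' _ (sq_nonneg _)]
  exact Real.le_sqrt_of_sq_le hsq

end Hilbert

theorem landweber_local_convergence_general
    {X Y : Type*} [NormedAddCommGroup X] [InnerProductSpace ℝ X] [CompleteSpace X]
    [NormedAddCommGroup Y] [InnerProductSpace ℝ Y] [CompleteSpace Y]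
    (A : Set X) (hA : IsOpen A) (K : Set X) (hKA : K ⊆ A) (hKcomp : IsCompact K)
    (F : X → Y) (F' : X → X →L[ℝ] Y)
    (hF : ∀ x ∈ A, HasFDerivAt F (F' x) x)
    -- (1) F' is Lipschitz on A
    (L : ℝ) (hL : 0 < L)
    (hF'lip : ∀ x₁ ∈ A, ∀ x₂ ∈ A, ‖F' x₁ - F' x₂‖ ≤ L * ‖x₁ - x₂‖)
    -- (2) F⁻¹ is Lipschitz: stability estimate on A
    (C : ℝ) (hC : 0 < C)
    (hstab : ∀ x₁ ∈ A, ∀ x₂ ∈ A, ‖x₁ - x₂‖ ≤ C * ‖F x₁ - F x₂‖) :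
    ∃ ρ ∈ Set.Ioo (0 : ℝ) 1, ∃ c ∈ Set.Ioo (0 : ℝ) 1, ∃ μ ∈ Set.Ioo (0 : ℝ) 1,
      ∀ xdag ∈ K, ∀ x₀ ∈ K, ‖xdag - x₀‖ < ρ →
        ∃ x : ℕ → X,
          x 0 = x₀ ∧
          (∀ k, x k ∈ A) ∧
          (∀ k, x (k + 1) =
            x k - μ • (ContinuousLinearMap.adjoint (F' (x k))) (F (x k) - F xdag)) ∧
          (∀ k, ‖xdag - x k‖ ≤ ρ * c ^ k) ∧
          Tendsto x atTop (𝓝 xdag) := by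
  obtain ⟨δ, hδ, hδA⟩ := hKcomp.exists_cthickening_subset_open hA hKA
  obtain ⟨M, hM, hF'M⟩ := exists_pos_bound_norm_near_compact hKcomp hKA hL.le hF'lip
  obtain ⟨ρ, hρ, hρδ, hLρC⟩ := exists_landweber_radius hδ hL hC
  obtain ⟨μ, hμ, hμM, hc⟩ := exists_landweber_step_size hM hC
  refine ⟨ρ, hρ, _, hc, μ, hμ, fun p hp x₀ _ hx₀ => ?_⟩
  set g : X → X := fun z => z - μ • adjoint (F' z) (F z - F p)
  have hρA : closedBall p ρ ⊆ A :=
    ((closedBall_subset_closedBall hρδ).trans (closedBall_subset_cthickening hp δ)).trans hδA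
  have hg : ∀ z ∈ closedBall p ρ, dist p (g z) ≤ √(1 - μ / (2 * C ^ 2)) * dist p z :=
    fun z hz => dist_landweber_step_le hF hF'lip hstab hL.le hC hρA hz hLρC
      (hF'M p hp z (hρA hz) (closedBall_subset_closedBall hρ.2.le hz)) hμ.1.le hμM
  have hdist := dist_iterate_le_geometric hc.1.le hc.2.le hg (by rw [dist_eq_norm]; exact hx₀.le)
  refine ⟨fun k => g^[k] x₀, rfl, fun k => hρA (mem_closedBall'.2 ((hdist k).trans
      (mul_le_of_le_one_right hρ.1.le (pow_le_one₀ hc.1.le hc.2.le)))),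
    fun k => Function.iterate_succ_apply' g k x₀,
    fun k => by simpa only [dist_eq_norm] using hdist k,
    tendsto_of_dist_le_geometric hc.1.le hc.2 hdist⟩

/-- Proposition `prop:land`: local convergence of the Landweber
iteration for a `C¹` map with Lipschitz derivative and Lipschitz stability. -/
theorem landweber_local_convergence
    {X Y : Type*} [NormedAddCommGroup X] [InnerProductSpace ℝ X] [CompleteSpace X]
    [NormedAddCommGroup Y] [InnerProductSpace ℝ Y] [CompleteSpace Y]
    (A : Set X) (hA : IsOpen A) (K : Set X) (hKA : K ⊆ A) (hKcomp : IsCompact K)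
    (F : X → Y) (F' : X → X →L[ℝ] Y)
    (hF : ∀ x ∈ A, HasFDerivAt F (F' x) x)
    (hF'cont : ContinuousOn F' A)
    -- (1) F' is Lipschitz on A
    (L : ℝ) (hL : 0 < L)
    (hF'lip : ∀ x₁ ∈ A, ∀ x₂ ∈ A, ‖F' x₁ - F' x₂‖ ≤ L * ‖x₁ - x₂‖)
    -- (2) F⁻¹ is Lipschitz: stability estimate on A
    (C : ℝ) (hC : 0 < C)
    (hstab : ∀ x₁ ∈ A, ∀ x₂ ∈ A, ‖x₁ - x₂‖ ≤ C * ‖F x₁ - F x₂‖) :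
    ∃ ρ ∈ Set.Ioo (0 : ℝ) 1, ∃ c ∈ Set.Ioo (0 : ℝ) 1, ∃ μ ∈ Set.Ioo (0 : ℝ) 1,
      ∀ xdag ∈ K, ∀ x₀ ∈ K, ‖xdag - x₀‖ < ρ →
        ∃ x : ℕ → X,
          x 0 = x₀ ∧
          (∀ k, x k ∈ A) ∧
          (∀ k, x (k + 1) =
            x k - μ • (ContinuousLinearMap.adjoint (F' (x k))) (F (x k) - F xdag)) ∧
          (∀ k, ‖xdag - x k‖ ≤ ρ * c ^ k) ∧
          Tendsto x atTop (𝓝 xdag) :=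
  landweber_local_convergence_general A hA K hKA hKcomp F F' hF L hL hF'lip C hC hstab
end
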